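/- Let A be a finite multiset in ℤ_p and let A_1,…,A_k be a Liouville partition of A. Suppose B is a finite multiset in ℤ_p weakly equivalent to A. Then B admits a Liouville partition B_1,…,B_k such that B_g is weakly equivalent to A_g for g = 1,…,k. -/
import Mathlib


open Filter

/-- `padicDist p m a` is `d_m(a) = min {|h| : h ∈ ℤ, a ≡ h (mod p^m ℤ_p)}`. -/
noncomputable def padicDist (p : ℕ) [Fact p.Prime] (m : ℕ) (a : ℤ_[p]) : ℕ :=
  sInf {k : ℕ | ∃ h : ℤ, h.natAbs = k ∧ (p : ℤ_[p]) ^ m ∣ a - (h : ℤ_[p])}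

/-- `a ∈ ℤ_p` is a p-adic Liouville number if `a ∉ ℤ` and
`liminf_{m→∞} d_m(a)/m < +∞`. -/
def IsPadicLiouville (p : ℕ) [Fact p.Prime] (a : ℤ_[p]) : Prop :=
  (∀ n : ℤ, a ≠ (n : ℤ_[p])) ∧
    liminf (fun m : ℕ => (((padicDist p m a : ℝ) / (m : ℝ)) : EReal)) atTop < (⊤ : EReal)

/-- Two finite multisets in `ℤ_p` are weakly equivalent: there exist orderings
`a_1,…,a_n`, `b_1,…,b_n`, a constant `c > 0`, and for each `m ≥ 1` a permutation `σ_m`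
with `d_m(a_{σ_m i} - b_i) ≤ c m`. -/
def WeaklyEquivalent (p : ℕ) [Fact p.Prime] (A B : Multiset ℤ_[p]) : Prop :=
  ∃ (n : ℕ) (a b : Fin n → ℤ_[p]) (c : ℝ),
    A = ↑(List.ofFn a) ∧ B = ↑(List.ofFn b) ∧ 0 < c ∧
    ∀ m : ℕ, 1 ≤ m → ∃ σ : Equiv.Perm (Fin n),
      ∀ i, (padicDist p m (a (σ i) - b i) : ℝ) ≤ c * m

/-- Two finite multisets in `ℤ_p` are equivalent: there exist orderings with
`a_i - b_i ∈ ℤ` for all `i`. -/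
def EquivalentMultisets (p : ℕ) [Fact p.Prime] (A B : Multiset ℤ_[p]) : Prop :=
  ∃ (n : ℕ) (a b : Fin n → ℤ_[p]),
    A = ↑(List.ofFn a) ∧ B = ↑(List.ofFn b) ∧
    ∀ i, ∃ k : ℤ, a i - b i = (k : ℤ_[p])

/-- `P 0, …, P (k-1)` form a Liouville partition of `A`: their multiset union is `A` and
no two elements of distinct parts differ by an integer or a p-adic Liouville number. -/
def IsLiouvillePartition (p : ℕ) [Fact p.Prime] (A : Multiset ℤ_[p]) {k : ℕ}
    (P : Fin k → Multiset ℤ_[p]) : Prop :=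
  (∑ g, P g) = A ∧
    ∀ g h : Fin k, g ≠ h → ∀ x ∈ P g, ∀ y ∈ P h,
      ¬ ((∃ n : ℤ, x - y = (n : ℤ_[p])) ∨ IsPadicLiouville p (x - y))

/-- A multiset is p-adic non-Liouville if it contains no p-adic Liouville number. -/
def PadicNonLiouvilleMultiset (p : ℕ) [Fact p.Prime] (A : Multiset ℤ_[p]) : Prop :=
  ∀ a ∈ A, ¬ IsPadicLiouville p a

/-- The difference multiset `A - A = {a - a' : a, a' ∈ A}`. -/
noncomputable def diffMultiset (p : ℕ) [Fact p.Prime] (A : Multiset ℤ_[p]) : Multiset ℤ_[p] :=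
  A.bind fun x => A.map fun y => x - y


section Aux

variable (p : ℕ) [Fact p.Prime]

lemma padicDist_nonempty (m : ℕ) (a : ℤ_[p]) :
    {k : ℕ | ∃ h : ℤ, h.natAbs = k ∧ (p : ℤ_[p]) ^ m ∣ a - (h : ℤ_[p])}.Nonempty := by
  refine ⟨(PadicInt.appr a m : ℤ).natAbs, (PadicInt.appr a m : ℤ), rfl, ?_⟩
  have := PadicInt.appr_spec m a
  rw [Ideal.mem_span_singleton] at this
  simpa using this

lemma padicDist_le (m : ℕ) (a : ℤ_[p]) (h : ℤ) (hd : (p : ℤ_[p]) ^ m ∣ a - (h : ℤ_[p])) :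
    padicDist p m a ≤ h.natAbs := Nat.sInf_le ⟨h, rfl, hd⟩

lemma padicDist_spec (m : ℕ) (a : ℤ_[p]) :
    ∃ h : ℤ, h.natAbs = padicDist p m a ∧ (p : ℤ_[p]) ^ m ∣ a - (h : ℤ_[p]) :=
  Nat.sInf_mem (padicDist_nonempty p m a)

lemma padicDist_mono {m m' : ℕ} (hm : m ≤ m') (a : ℤ_[p]) :
    padicDist p m a ≤ padicDist p m' a := by
  obtain ⟨h, hh, hd⟩ := padicDist_spec p m' a
  exact hh ▸ padicDist_le p m a h ((pow_dvd_pow _ hm).trans hd)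

lemma padicDist_neg (m : ℕ) (a : ℤ_[p]) : padicDist p m (-a) = padicDist p m a := by
  have key : ∀ x : ℤ_[p], padicDist p m (-x) ≤ padicDist p m x := by
    intro x
    obtain ⟨h, hh, hd⟩ := padicDist_spec p m x
    have hdvd : (p : ℤ_[p]) ^ m ∣ -x - ((-h : ℤ) : ℤ_[p]) := by
      push_cast
      rw [show -x - -(h : ℤ_[p]) = -(x - h) by ring]
      exact hd.neg_right
    calc padicDist p m (-x) ≤ (-h).natAbs := padicDist_le p m _ _ hdvd
    _ = h.natAbs := Int.natAbs_neg h
    _ = _ := hh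
  refine le_antisymm (key a) ?_
  simpa using key (-a)

lemma padicDist_sub_le (m : ℕ) (x y z : ℤ_[p]) :
    padicDist p m (x - y) ≤ padicDist p m (x - z) + padicDist p m (z - y) := by
  obtain ⟨h1, hh1, hd1⟩ := padicDist_spec p m (x - z)
  obtain ⟨h2, hh2, hd2⟩ := padicDist_spec p m (z - y)
  have hdvd : (p : ℤ_[p]) ^ m ∣ (x - y) - ((h1 + h2 : ℤ) : ℤ_[p]) := by
    push_cast
    rw [show x - y - ((h1 : ℤ_[p]) + h2) = (x - z - h1) + (z - y - h2) by ring]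
    exact dvd_add hd1 hd2
  calc padicDist p m (x - y) ≤ (h1 + h2).natAbs := padicDist_le p m _ _ hdvd
  _ ≤ h1.natAbs + h2.natAbs := Int.natAbs_add_le _ _
  _ = _ := by rw [hh1, hh2]

lemma padicDist_intCast (m : ℕ) (n : ℤ) : padicDist p m ((n : ℤ) : ℤ_[p]) ≤ n.natAbs :=
  padicDist_le p m _ n (by simp)

end Aux

lemma subtype_univ_val_map {n : ℕ} (q : Fin n → Prop) [DecidablePred q] :
    (Finset.univ : Finset {j : Fin n // q j}).val.map Subtype.val = (Finset.univ.filter q).val := by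
  rw [← Finset.subtype_univ q, ← Finset.subtype_map q]
  rfl

lemma ofFn_map_filter {α : Type*} {n : ℕ} (v : Fin n → α) (q : Fin n → Prop) [DecidablePred q]
    {m : ℕ} (e : Fin m ≃ {j : Fin n // q j}) :
    Multiset.map v ((Finset.univ.filter q).val) = ↑(List.ofFn (fun t => v (e t))) := by
  have h1 : (↑(List.ofFn (fun t => v (e t))) : Multiset α)
      = Multiset.map (fun t => v (e t)) (Finset.univ : Finset (Fin m)).val := by
    simp [List.ofFn_eq_map]
  have h3 : (Finset.univ.val.map ⇑e : Multiset {j : Fin n // q j}) = Finset.univ.val := by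
    have := congrArg Finset.val (Finset.map_univ_equiv e)
    simpa [Finset.map_val] using this
  rw [h1]
  have h2 : Multiset.map (fun t => v (e t)) (Finset.univ : Finset (Fin m)).val
      = Multiset.map (fun j : {j : Fin n // q j} => v j) (Finset.univ.val.map e) := by
    rw [Multiset.map_map]; rfl
  rw [h2, h3, ← subtype_univ_val_map q, Multiset.map_map]
  rfl

lemma multiset_sum_filter_eq {n k : ℕ} (f : Fin n → Fin k) (s : Multiset (Fin n)) :
    ∑ g : Fin k, s.filter (fun i => f i = g) = s := by
  ext a
  rw [Multiset.count_sum']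
  simp [Multiset.count_filter]


/-- If `A_1,…,A_k` is a Liouville partition of `A` and `B` is weakly
equivalent to `A`, then `B` admits a Liouville partition `B_1,…,B_k` with `B_g` weakly
equivalent to `A_g` for each `g`. -/
theorem exists_liouvillePartition_of_weaklyEquivalent
    (p : ℕ) [Fact p.Prime] {k : ℕ}
    (A B : Multiset ℤ_[p]) (PA : Fin k → Multiset ℤ_[p])
    (hA : IsLiouvillePartition p A PA)
    (hAB : WeaklyEquivalent p A B) :
    ∃ PB : Fin k → Multiset ℤ_[p],
      IsLiouvillePartition p B PB ∧ ∀ g, WeaklyEquivalent p (PB g) (PA g) := by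
  classical
  obtain ⟨n, a, b, c, hAeq, hBeq, hc, hperm⟩ := hAB
  -- the permutations
  set σ' : ℕ → Equiv.Perm (Fin n) :=
    fun m => if h : 1 ≤ m then (hperm m h).choose else Equiv.refl _ with hσ'def
  have hσ' : ∀ m, 1 ≤ m → ∀ i, (padicDist p m (a (σ' m i) - b i) : ℝ) ≤ c * m := by
    intro m hm i
    simp only [hσ'def, dif_pos hm]
    exact (hperm m hm).choose_spec i
  -- the part assignment for `a`
  have hmemA : ∀ j, ∃ g, a j ∈ PA g := by
    intro j
    have hj : a j ∈ A := by
      rw [hAeq, Multiset.mem_coe, List.mem_ofFn]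
      exact ⟨j, rfl⟩
    rw [← hA.1] at hj
    obtain ⟨g, -, hg⟩ := Multiset.mem_sum.mp hj
    exact ⟨g, hg⟩
  set π : Fin n → Fin k := fun j => (hmemA j).choose with hπdef
  have hπ : ∀ j, a j ∈ PA (π j) := fun j => (hmemA j).choose_spec
  have hπuniq : ∀ j g, a j ∈ PA g → π j = g := by
    intro j g hg
    by_contra hne
    exact hA.2 _ _ hne _ (hπ j) _ hg (Or.inl ⟨0, by simp⟩)
  -- eventual lower bound on cross-part distances
  have hcross : ∀ j j' : Fin n, π j ≠ π j' →
      liminf (fun m : ℕ => (((padicDist p m (a j - a j') : ℝ) / (m : ℝ)) : EReal)) atTop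
        = (⊤ : EReal) := by
    intro j j' hne
    have hno := hA.2 _ _ hne _ (hπ j) _ (hπ j')
    push_neg at hno
    by_contra htop
    exact hno.2 ⟨hno.1, lt_top_iff_ne_top.mpr htop⟩
  have hlow : ∀ C : ℝ, ∀ᶠ m : ℕ in atTop, ∀ j j' : Fin n, π j ≠ π j' →
      C * m < (padicDist p m (a j - a j') : ℝ) := by
    intro C
    refine eventually_all.mpr fun j => eventually_all.mpr fun j' => ?_
    by_cases hne : π j = π j'
    · exact Eventually.of_forall fun m hn => absurd hne hn
    · have hev := eventually_lt_of_lt_liminf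
        ((hcross j j' hne) ▸ EReal.coe_lt_top C) (by isBoundedDefault)
      filter_upwards [hev, eventually_ge_atTop 1] with m h1 h2 _
      have hC : C < (padicDist p m (a j - a j') : ℝ) / m := EReal.coe_lt_coe_iff.mp h1
      have hm' : (1:ℝ) ≤ (m:ℝ) := by exact_mod_cast h2
      have hm0 : (0:ℝ) < (m:ℝ) := by linarith
      calc C * m < ((padicDist p m (a j - a j') : ℝ) / m) * m := by nlinarith
      _ = _ := by field_simp
  -- the threshold M0
  obtain ⟨M1, hM1⟩ := eventually_atTop.mp (hlow (3 * c))
  set M0 := max M1 1 with hM0def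
  have hM0_1 : 1 ≤ M0 := le_max_right _ _
  have hM0_M1 : M1 ≤ M0 := le_max_left _ _
  -- stability of the part assignment
  have hstep : ∀ m, M0 ≤ m → ∀ i, π (σ' (m + 1) i) = π (σ' m i) := by
    intro m hm i
    by_contra hne
    have hm1 : 1 ≤ m := le_trans hM0_1 hm
    have hlower := hM1 m (le_trans hM0_M1 hm) (σ' (m + 1) i) (σ' m i) hne
    have t1 : (padicDist p m (a (σ' (m + 1) i) - a (σ' m i)) : ℝ)
        ≤ (padicDist p m (a (σ' (m + 1) i) - b i) : ℝ)
          + (padicDist p m (b i - a (σ' m i)) : ℝ) := by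
      exact_mod_cast padicDist_sub_le p m _ _ (b i)
    have t2 : (padicDist p m (a (σ' (m + 1) i) - b i) : ℝ) ≤ c * (m + 1) := by
      have h2 := hσ' (m + 1) (by omega) i
      have mono : (padicDist p m (a (σ' (m + 1) i) - b i) : ℝ)
          ≤ (padicDist p (m + 1) (a (σ' (m + 1) i) - b i) : ℝ) := by
        exact_mod_cast padicDist_mono p (Nat.le_succ m) _
      refine mono.trans (h2.trans ?_)
      push_cast
      exact le_refl _
    have t3 : (padicDist p m (b i - a (σ' m i)) : ℝ) ≤ c * m := by
      rw [show b i - a (σ' m i) = -(a (σ' m i) - b i) by ring, padicDist_neg]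
      exact hσ' m hm1 i
    have hm' : (1:ℝ) ≤ (m:ℝ) := by exact_mod_cast hm1
    nlinarith
  have hstab : ∀ m, M0 ≤ m → ∀ i, π (σ' m i) = π (σ' M0 i) := by
    intro m hm
    induction m, hm using Nat.le_induction with
    | base => intro i; rfl
    | succ m hm ih => intro i; rw [hstep m hm i, ih i]
  -- the part assignment for `b`
  set f : Fin n → Fin k := fun i => π (σ' M0 i) with hfdef
  have hcard : ∀ g, Fintype.card {i : Fin n // f i = g}
      = Fintype.card {j : Fin n // π j = g} :=
    fun g => Fintype.card_congr (Equiv.subtypeEquiv (σ' M0) (fun i => Iff.rfl))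
  set ng : Fin k → ℕ := fun g => Fintype.card {i : Fin n // f i = g} with hngdef
  set eI : (g : Fin k) → Fin (ng g) ≃ {i : Fin n // f i = g} :=
    fun g => (Fintype.equivFin _).symm with heIdef
  set eJ : (g : Fin k) → Fin (ng g) ≃ {j : Fin n // π j = g} :=
    fun g => (finCongr (hcard g)).trans (Fintype.equivFin _).symm with heJdef
  refine ⟨fun g => ↑(List.ofFn (fun t : Fin (ng g) => b ((eI g t) : Fin n))), ⟨?_, ?_⟩, ?_⟩
  -- the union is B
  · have hPBg : ∀ g, (↑(List.ofFn (fun t : Fin (ng g) => b ((eI g t) : Fin n))) : Multiset ℤ_[p])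
        = Multiset.map b ((Finset.univ.filter (fun i => f i = g)).val) :=
      fun g => (ofFn_map_filter b (fun i => f i = g) (eI g)).symm
    rw [hBeq]
    have hB' : (↑(List.ofFn b) : Multiset ℤ_[p])
        = Multiset.map b (Finset.univ : Finset (Fin n)).val := by
      simp [List.ofFn_eq_map]
    rw [hB']
    calc (∑ g, (↑(List.ofFn (fun t : Fin (ng g) => b ((eI g t) : Fin n))) : Multiset ℤ_[p]))
        = ∑ g, Multiset.map b ((Finset.univ.filter (fun i => f i = g)).val) :=
          Finset.sum_congr rfl (fun g _ => hPBg g)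
    _ = Multiset.map b (∑ g, (Finset.univ.filter (fun i => f i = g)).val) :=
          by
          have hms := map_sum (Multiset.mapAddMonoidHom b)
            (fun g => (Finset.univ.filter (fun i => f i = g)).val) Finset.univ
          simp only [Multiset.coe_mapAddMonoidHom] at hms
          exact hms.symm
    _ = Multiset.map b (Finset.univ : Finset (Fin n)).val := by
          rw [show (∑ g, (Finset.univ.filter (fun i => f i = g)).val)
              = ∑ g, (Finset.univ : Finset (Fin n)).val.filter (fun i => f i = g) from rfl,
            multiset_sum_filter_eq]
  -- cross condition for the new partition
  · intro g h hgh x hx y hy hcon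
    rw [Multiset.mem_coe, List.mem_ofFn] at hx hy
    obtain ⟨t, ht⟩ := hx
    obtain ⟨t', ht'⟩ := hy
    set i : Fin n := (eI g t : Fin n) with hidef
    set i' : Fin n := (eI h t' : Fin n) with hi'def
    have hfi : f i = g := (eI g t).prop
    have hfi' : f i' = h := (eI h t').prop
    subst ht ht'
    -- frequent upper bound on d_m (b i - b i')
    have hup : ∃ C1 : ℝ, ∃ᶠ m in atTop,
        1 ≤ m ∧ (padicDist p m (b i - b i') : ℝ) < C1 * m := by
      rcases hcon with ⟨nn, hnn⟩ | hL
      · refine ⟨(nn.natAbs : ℝ) + 1, Eventually.frequently ?_⟩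
        filter_upwards [eventually_ge_atTop 1] with m hm
        refine ⟨hm, ?_⟩
        have hd : (padicDist p m (b i - b i') : ℝ) ≤ (nn.natAbs : ℝ) := by
          rw [hnn]; exact_mod_cast padicDist_intCast p m nn
        have hm' : (1:ℝ) ≤ (m:ℝ) := by exact_mod_cast hm
        nlinarith [Nat.cast_nonneg (α := ℝ) nn.natAbs]
      · obtain ⟨r, hr1, hr2⟩ := EReal.lt_iff_exists_real_btwn.mp hL.2
        refine ⟨r, ?_⟩
        have hfreq := frequently_lt_of_liminf_lt (by isBoundedDefault) hr1
        refine (hfreq.and_eventually (eventually_ge_atTop 1)).mono ?_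
        rintro m ⟨h1, h2⟩
        refine ⟨h2, ?_⟩
        have hC : (padicDist p m (b i - b i') : ℝ) / m < r := EReal.coe_lt_coe_iff.mp h1
        have hm' : (1:ℝ) ≤ (m:ℝ) := by exact_mod_cast h2
        have hm0 : (0:ℝ) < (m:ℝ) := by linarith
        calc (padicDist p m (b i - b i') : ℝ)
            = ((padicDist p m (b i - b i') : ℝ) / m) * m := by field_simp
        _ < r * m := by nlinarith
    obtain ⟨C1, hfreq⟩ := hup
    have hev := (hlow (2 * c + C1)).and (eventually_ge_atTop M0)
    obtain ⟨m, ⟨hm1, hmd⟩, hlow', hmM0⟩ := (hfreq.and_eventually hev).exists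
    have hπj : π (σ' m i) = g := by rw [hstab m hmM0 i]; exact hfi
    have hπj' : π (σ' m i') = h := by rw [hstab m hmM0 i']; exact hfi'
    have hne : π (σ' m i) ≠ π (σ' m i') := by rw [hπj, hπj']; exact hgh
    have hlb := hlow' (σ' m i) (σ' m i') hne
    have u1 : padicDist p m (a (σ' m i) - a (σ' m i'))
        ≤ padicDist p m (a (σ' m i) - b i) + padicDist p m (b i - b i')
          + padicDist p m (b i' - a (σ' m i')) := by
      have e1 := padicDist_sub_le p m (a (σ' m i)) (a (σ' m i')) (b i)
      have e2 := padicDist_sub_le p m (b i) (a (σ' m i')) (b i')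
      omega
    have u1' : (padicDist p m (a (σ' m i) - a (σ' m i')) : ℝ)
        ≤ (padicDist p m (a (σ' m i) - b i) : ℝ) + (padicDist p m (b i - b i') : ℝ)
          + (padicDist p m (b i' - a (σ' m i')) : ℝ) := by exact_mod_cast u1
    have u2 : (padicDist p m (a (σ' m i) - b i) : ℝ) ≤ c * m := hσ' m hm1 i
    have u3 : (padicDist p m (b i' - a (σ' m i')) : ℝ) ≤ c * m := by
      rw [show b i' - a (σ' m i') = -(a (σ' m i') - b i') by ring, padicDist_neg]
      exact hσ' m hm1 i'
    linarith
  -- weak equivalence of the parts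
  · intro g
    refine ⟨ng g, (fun t => b ((eI g t) : Fin n)), (fun t => a ((eJ g t) : Fin n)),
      c * M0, rfl, ?_, ?_, ?_⟩
    · -- PA g = ofFn
      have hPAfilter : PA g = Multiset.filter (fun x => x ∈ PA g) A := by
        ext x
        rw [Multiset.count_filter]
        by_cases hxg : x ∈ PA g
        · rw [if_pos hxg, ← hA.1, Multiset.count_sum']
          rw [Finset.sum_eq_single g (fun h _ hne => ?_) (by simp)]
          by_contra hcnt
          have hxh : x ∈ PA h := by
            rw [← Multiset.count_pos]
            omega
          exact hA.2 h g hne x hxh x hxg (Or.inl ⟨0, by simp⟩)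
        · rw [if_neg hxg, Multiset.count_eq_zero.mpr hxg]
      rw [hPAfilter, hAeq]
      have hA' : (↑(List.ofFn a) : Multiset ℤ_[p])
          = Multiset.map a (Finset.univ : Finset (Fin n)).val := by
        simp [List.ofFn_eq_map]
      rw [hA', Multiset.filter_map]
      have hcongr : Multiset.filter ((fun x => x ∈ PA g) ∘ a)
            (Finset.univ : Finset (Fin n)).val
          = Multiset.filter (fun j => π j = g) (Finset.univ : Finset (Fin n)).val := by
        apply Multiset.filter_congr
        intro j _
        exact ⟨fun hj => hπuniq j g hj, fun hj => hj ▸ hπ j⟩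
      rw [hcongr]
      exact ofFn_map_filter a (fun j => π j = g) (eJ g)
    · -- positivity of the constant
      have : (0:ℝ) < (M0:ℝ) := by exact_mod_cast hM0_1
      positivity
    · -- the permutations
      intro m hm
      set m' := max m M0 with hm'def
      have hm'1 : 1 ≤ m' := le_trans hM0_1 (le_max_right _ _)
      have hm'M0 : M0 ≤ m' := le_max_right _ _
      have hiff : ∀ i : Fin n, f i = g ↔ π (σ' m' i) = g := by
        intro i
        rw [hstab m' hm'M0 i]
      set r : {i : Fin n // f i = g} ≃ {j : Fin n // π j = g} :=
        Equiv.subtypeEquiv (σ' m') hiff with hrdef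
      set τ : Equiv.Perm (Fin (ng g)) := (eI g).trans (r.trans (eJ g).symm) with hτdef
      refine ⟨τ.symm, fun t => ?_⟩
      have key : σ' m' ((eI g (τ.symm t)) : Fin n) = ((eJ g t) : Fin n) := by
        have h5 : (eJ g) t = r ((eI g) (τ.symm t)) := by
          conv_lhs => rw [← Equiv.apply_symm_apply τ t]
          simp [hτdef, Equiv.trans_apply]
        rw [h5, hrdef]
        rfl
      rw [show b ((eI g (τ.symm t)) : Fin n) - a ((eJ g t) : Fin n)
          = -(a ((eJ g t) : Fin n) - b ((eI g (τ.symm t)) : Fin n)) by ring, padicDist_neg,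
        ← key]
      have b1 : (padicDist p m (a (σ' m' ((eI g (τ.symm t)) : Fin n))
            - b ((eI g (τ.symm t)) : Fin n)) : ℝ)
          ≤ (padicDist p m' (a (σ' m' ((eI g (τ.symm t)) : Fin n))
            - b ((eI g (τ.symm t)) : Fin n)) : ℝ) := by
        exact_mod_cast padicDist_mono p (le_max_left m M0) _
      have b2 := hσ' m' hm'1 ((eI g (τ.symm t)) : Fin n)
      have b3 : (m' : ℝ) ≤ (M0 : ℝ) * (m : ℝ) := by
        have : m' ≤ M0 * m := by
          rw [hm'def]
          exact max_le (Nat.le_mul_of_pos_left m (by omega)) (Nat.le_mul_of_pos_right M0 hm)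
        exact_mod_cast this
      calc (padicDist p m (a (σ' m' ((eI g (τ.symm t)) : Fin n))
            - b ((eI g (τ.symm t)) : Fin n)) : ℝ) ≤ c * m' := b1.trans b2
      _ ≤ c * M0 * m := by nlinarith
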